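/- arXiv:1404.3187 — 4 statements merged into one kernel-verified Lean document; each statement's English description precedes it below -/
import Mathlib

section
/- Let f : ℝⁿ → ℝ be a convex function whose infimum m = inf f (possibly −∞) is not attained. Then there exists a unit vector u ∈ ℝⁿ such that f(x + t·u) ≤ f(x) for every x ∈ ℝⁿ and every t ≥ 0; equivalently, u is a common recession direction of all nonempty sublevel sets {x : f(x) ≤ c}. -/
/-!
If the infimum of a continuous `f` is not attained, the sublevel set `{f ≤ f 0}` is unbounded
(otherwise it is compact and `f` attains its minimum on it, which is then a global minimum).
Pick `y k` in it with `‖y k‖ → ∞` and `y k / ‖y k‖ → u`. For fixed `x` and `t ≥ 0`, the point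
`x + (t / ‖y k‖) • (y k - x)` lies on the segment `[x, y k]` and tends to `x + t • u`, and by
convexity `f` there is at most `(1 - t / ‖y k‖) f x + (t / ‖y k‖) f 0 → f x`.
-/

/-- A unit vector `u` is a recession direction of `C` if `x + t • u ∈ C`
for every `x ∈ C` and `t ≥ 0`. -/
def IsRecessionDirection {n : ℕ} (C : Set (EuclideanSpace ℝ (Fin n)))
    (u : EuclideanSpace ℝ (Fin n)) : Prop :=
  ‖u‖ = 1 ∧ ∀ x ∈ C, ∀ t : ℝ, 0 ≤ t → x + t • u ∈ C

open Filter Topology Bornology Metric Set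

theorem Continuous.not_isBounded_setOf_le {X : Type*} [PseudoMetricSpace X] [ProperSpace X]
    {f : X → ℝ} (hf : Continuous f) (hmin : ∀ x, ∃ y, f y < f x) (a : X) :
    ¬ IsBounded {y | f y ≤ f a} := by
  intro hbdd
  have hcpt : IsCompact {y | f y ≤ f a} :=
    isCompact_of_isClosed_isBounded (isClosed_le hf continuous_const) hbdd
  obtain ⟨p, hpa, hp⟩ := hcpt.exists_isMinOn ⟨a, le_refl (f a)⟩ hf.continuousOn
  obtain ⟨y, hy⟩ := hmin p
  exact (hp (le_of_lt (hy.trans_le hpa))).not_gt hy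

section

variable {E : Type*} [NormedAddCommGroup E] [NormedSpace ℝ E]

theorem exists_seq_tendsto_normalize_of_not_isBounded [ProperSpace E] {S : Set E}
    (hS : ¬ IsBounded S) :
    ∃ u : E, ‖u‖ = 1 ∧ ∃ y : ℕ → E, (∀ k, y k ∈ S) ∧
      Tendsto (fun k => ‖y k‖) atTop atTop ∧
      Tendsto (fun k => ‖y k‖⁻¹ • y k) atTop (𝓝 u) := by
  have hfar : ∀ k : ℕ, ∃ y ∈ S, (k : ℝ) < ‖y‖ := by
    intro k
    by_contra! h
    exact hS ((isBounded_iff_subset_closedBall 0).2 ⟨k, fun y hy => by simpa using h y hy⟩)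
  choose y hyS hyk using hfar
  have hpos : ∀ k, 0 < ‖y k‖ := fun k => (Nat.cast_nonneg k).trans_lt (hyk k)
  have hsphere : ∀ k, ‖y k‖⁻¹ • y k ∈ sphere (0 : E) 1 := fun k => by
    simp [norm_smul, (hpos k).ne']
  obtain ⟨u, hu, φ, hφ, hlim⟩ := (isCompact_sphere (0 : E) 1).tendsto_subseq hsphere
  refine ⟨u, by simpa using hu, y ∘ φ, fun k => hyS (φ k), ?_, hlim⟩
  refine tendsto_atTop_mono (fun k => ?_) (tendsto_natCast_atTop_atTop.comp hφ.tendsto_atTop)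
  exact (hyk (φ k)).le

theorem tendsto_add_smul_sub_of_tendsto_normalize {y : ℕ → E} {u : E}
    (hy : Tendsto (fun k => ‖y k‖) atTop atTop)
    (hu : Tendsto (fun k => ‖y k‖⁻¹ • y k) atTop (𝓝 u)) (x : E) (t : ℝ) :
    Tendsto (fun k => x + (t * ‖y k‖⁻¹) • (y k - x)) atTop (𝓝 (x + t • u)) := by
  have hx : Tendsto (fun k => (t * ‖y k‖⁻¹) • x) atTop (𝓝 0) := by
    simpa using (hy.inv_tendsto_atTop.const_mul t).smul_const x
  have := (hu.const_smul t).sub hx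
  rw [sub_zero] at this
  refine this.const_add x |>.congr fun k => ?_
  rw [smul_sub, mul_smul, mul_smul]

theorem ConvexOn.apply_add_smul_le_of_tendsto_normalize {f : E → ℝ}
    (hf : ConvexOn ℝ univ f) (hcont : Continuous f) {y : ℕ → E} {c : ℝ}
    (hyc : ∀ k, f (y k) ≤ c) (hy : Tendsto (fun k => ‖y k‖) atTop atTop) {u : E}
    (hu : Tendsto (fun k => ‖y k‖⁻¹ • y k) atTop (𝓝 u)) (x : E) {t : ℝ} (ht : 0 ≤ t) :
    f (x + t • u) ≤ f x := by
  set θ : ℕ → ℝ := fun k => t * ‖y k‖⁻¹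
  have hθ : Tendsto θ atTop (𝓝 0) := by
    simpa using hy.inv_tendsto_atTop.const_mul t
  have hbound : Tendsto (fun k => (1 - θ k) * f x + θ k * c) atTop (𝓝 (f x)) := by
    simpa using
      ((tendsto_const_nhds (x := (1 : ℝ)) |>.sub hθ).mul_const (f x)).add (hθ.mul_const c)
  refine le_of_tendsto_of_tendsto
    ((hcont.tendsto _).comp (tendsto_add_smul_sub_of_tendsto_normalize hy hu x t)) hbound ?_
  filter_upwards [hy.eventually_ge_atTop (max t 1)] with k hk
  have hθ0 : 0 ≤ θ k := by positivity
  have hθ1 : θ k ≤ 1 := by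
    simp only [θ, ← div_eq_mul_inv]
    exact div_le_one_of_le₀ ((le_max_left _ _).trans hk) (by positivity)
  have hcomb : x + θ k • (y k - x) = (1 - θ k) • x + θ k • y k := by
    rw [smul_sub, sub_smul, one_smul]; abel
  calc f (x + θ k • (y k - x)) = f ((1 - θ k) • x + θ k • y k) := by rw [hcomb]
    _ ≤ (1 - θ k) * f x + θ k * f (y k) :=
        hf.2 (mem_univ x) (mem_univ (y k)) (by linarith) hθ0 (by ring)
    _ ≤ (1 - θ k) * f x + θ k * c := by gcongr; exact hyc k

end

theorem stmt2 {n : ℕ} (f : EuclideanSpace ℝ (Fin n) → ℝ)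
    (hf : ConvexOn ℝ Set.univ f)
    (hnot : ¬ ∃ x : EuclideanSpace ℝ (Fin n), ∀ y, f x ≤ f y) :
    ∃ u : EuclideanSpace ℝ (Fin n), ‖u‖ = 1 ∧
      ∀ x : EuclideanSpace ℝ (Fin n), ∀ t : ℝ, 0 ≤ t → f (x + t • u) ≤ f x := by
  have hcont : Continuous f := continuousOn_univ.1 (hf.continuousOn isOpen_univ)
  push Not at hnot
  obtain ⟨u, hu, y, hyS, hy, hdir⟩ :=
    exists_seq_tendsto_normalize_of_not_isBounded (hcont.not_isBounded_setOf_le hnot 0)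
  exact ⟨u, hu, fun x t ht => hf.apply_add_smul_le_of_tendsto_normalize hcont hyS hy hdir x ht⟩
end

section
/- Let f : ℝⁿ → ℝ be a convex function attaining its infimum m, and let M = {x : f(x) = m}, a nonempty closed convex set. Let L = {v ∈ ℝⁿ : x + t·v ∈ M for all x ∈ M and all t ∈ ℝ} (a linear subspace, the lineality space of M), fix x₀ ∈ M and set T = M ∩ (x₀ + L^⊥). Then M = {t + v : t ∈ T, v ∈ L}, T contains no affine line, and if T is unbounded then T has at least one recession direction and there exist a unit vector w and ε > 0 such that ⟨u, w⟩ ≥ ε for every recession direction u of T. -/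
/-
Since `x₀` is a minimizer, `M` is a sublevel set of the continuous convex function `f`, hence
closed and convex. In a closed convex set a ray from one point is a recession direction at every
point (pass to the limit in the segments joining the other point to far-out points of the ray),
so a line in `M` has its direction in `L`; since `T - x₀ ⊆ L^⊥`, `T` contains no line, and the
orthogonal projection onto `L` splits `M = T + L`.

If `T` is unbounded, a limit point of the normalised directions towards far-away points of `T`
is a recession direction. The recession cone `R` of `T` is a closed convex cone, salient because
`T` contains no line. Its dual cone `R*` therefore spans the space (a vector orthogonal to `R*`
lies, with its negative, in `R** = R`), so `R*` has an interior point `w`, and a ball around `w`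
inside `R*` gives `⟪u, w⟫ ≥ ε ‖u‖` on `R`.
-/

open scoped RealInnerProductSpace

open Filter Topology Set

section Recession

variable {E : Type*} [AddCommGroup E] [Module ℝ E]

def recessionCone (C : Set E) : PointedCone ℝ E where
  carrier := {v | ∀ x ∈ C, ∀ t : ℝ, 0 ≤ t → x + t • v ∈ C}
  add_mem' {v w} hv hw x hx t ht := by
    simpa only [smul_add, add_assoc] using hw _ (hv x hx t ht) t ht
  zero_mem' x hx t _ := by simpa using hx
  smul_mem' c v hv x hx t ht := by
    simpa only [← Nonneg.coe_smul, smul_smul] using hv x hx (t * c) (mul_nonneg ht c.2)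

theorem mem_recessionCone {C : Set E} {v : E} :
    v ∈ recessionCone C ↔ ∀ x ∈ C, ∀ t : ℝ, 0 ≤ t → x + t • v ∈ C := Iff.rfl

theorem add_smul_mem_of_mem_lineal_recessionCone {C : Set E} {v x : E}
    (hv : v ∈ (recessionCone C).lineal) (hx : x ∈ C) (t : ℝ) : x + t • v ∈ C := by
  rcases le_total 0 t with ht | ht
  · exact hv.1 x hx t ht
  · simpa using hv.2 x hx (-t) (neg_nonneg.mpr ht)

theorem coe_lineal_recessionCone (C : Set E) :
    ((recessionCone C).lineal : Set E) = {v | ∀ x ∈ C, ∀ t : ℝ, x + t • v ∈ C} := by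
  ext v
  refine ⟨fun hv x hx t ↦ add_smul_mem_of_mem_lineal_recessionCone hv hx t, fun hv ↦ ?_⟩
  exact ⟨fun x hx t _ ↦ hv x hx t, fun x hx t _ ↦ by simpa using hv x hx (-t)⟩

theorem recessionCone_salient {C : Set E} {x : E} (hx : x ∈ C)
    (hC : ¬ ∃ x u : E, u ≠ 0 ∧ ∀ s : ℝ, x + s • u ∈ C) :
    ∀ v ∈ recessionCone C, -v ∈ recessionCone C → v = 0 := by
  intro v hv hnv
  by_contra hv0
  exact hC ⟨x, v, hv0, add_smul_mem_of_mem_lineal_recessionCone ⟨hv, hnv⟩ hx⟩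

end Recession

section ClosedConvex

variable {E : Type*} [NormedAddCommGroup E] [NormedSpace ℝ E] {C : Set E}

theorem isClosed_recessionCone (hC : IsClosed C) :
    IsClosed (recessionCone C : Set E) := by
  have : (recessionCone C : Set E) = ⋂ x ∈ C, ⋂ t ∈ Ici (0 : ℝ), (fun v ↦ x + t • v) ⁻¹' C := by
    ext v; simp [mem_recessionCone]
  rw [this]
  exact isClosed_biInter fun x _ ↦ isClosed_biInter fun t _ ↦ hC.preimage (by fun_prop)

theorem IsClosed.mem_recessionCone_of_ray (hC : IsClosed C) (hconv : Convex ℝ C) {x u : E}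
    (hray : ∀ t : ℝ, 0 ≤ t → x + t • u ∈ C) : u ∈ recessionCone C := by
  intro y hy t ht
  have hmem : ∀ᶠ r in 𝓝[>] (0 : ℝ), y + t • u + r • (x - y) ∈ C := by
    filter_upwards [Ioo_mem_nhdsGT one_pos] with r ⟨hr0, hr1⟩
    have heq : y + t • u + r • (x - y) = (1 - r) • y + r • (x + (t / r) • u) := by
      rw [smul_add, smul_smul, mul_div_cancel₀ t hr0.ne']; module
    rw [heq]
    exact hconv hy (hray _ (div_nonneg ht hr0.le)) (by linarith) hr0.le (by ring)
  have hlim : Tendsto (fun r : ℝ ↦ y + t • u + r • (x - y)) (𝓝[>] 0) (𝓝 (y + t • u)) := by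
    refine tendsto_nhdsWithin_of_tendsto_nhds ?_
    simpa using (show Continuous fun r : ℝ ↦ y + t • u + r • (x - y) by fun_prop).tendsto 0
  exact hC.mem_of_tendsto hlim hmem

theorem IsClosed.mem_lineal_recessionCone_of_line (hC : IsClosed C) (hconv : Convex ℝ C)
    {x u : E} (hline : ∀ s : ℝ, x + s • u ∈ C) : u ∈ (recessionCone C).lineal :=
  ⟨hC.mem_recessionCone_of_ray hconv fun t _ ↦ hline t,
    hC.mem_recessionCone_of_ray hconv fun t _ ↦ by simpa using hline (-t)⟩

theorem IsClosed.exists_norm_eq_one_mem_recessionCone [FiniteDimensional ℝ E]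
    (hC : IsClosed C) (hconv : Convex ℝ C) (hunb : ¬ Bornology.IsBounded C) :
    ∃ u, ‖u‖ = 1 ∧ u ∈ recessionCone C := by
  obtain ⟨x, hx⟩ : C.Nonempty := Bornology.nonempty_of_not_isBounded hunb
  have hfar : ∀ k : ℕ, ∃ y ∈ C, (k : ℝ) < ‖y - x‖ := by
    intro k
    by_contra! h
    exact hunb ((Metric.isBounded_iff_subset_closedBall x).mpr
      ⟨k, fun y hy ↦ by simpa [dist_eq_norm] using h y hy⟩)
  choose y hyC hy using hfar
  have hpos : ∀ k, 0 < ‖y k - x‖ := fun k ↦ (Nat.cast_nonneg k).trans_lt (hy k)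
  set d : ℕ → E := fun k ↦ ‖y k - x‖⁻¹ • (y k - x)
  have hd : ∀ k, d k ∈ Metric.sphere (0 : E) 1 := fun k ↦ by
    simp [d, norm_smul, (hpos k).ne']
  obtain ⟨u, hu, φ, hφ, hlim⟩ := (isCompact_sphere (0 : E) 1).tendsto_subseq hd
  refine ⟨u, mem_sphere_zero_iff_norm.mp hu,
    hC.mem_recessionCone_of_ray hconv (x := x) fun t ht ↦ ?_⟩
  refine hC.mem_of_tendsto (tendsto_const_nhds.add (hlim.const_smul t)) ?_
  filter_upwards [eventually_ge_atTop ⌈t⌉₊] with k hk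
  have htk : t ≤ ‖y (φ k) - x‖ :=
    calc t ≤ ⌈t⌉₊ := Nat.le_ceil t
      _ ≤ φ k := by exact_mod_cast hk.trans hφ.le_apply
      _ ≤ ‖y (φ k) - x‖ := (hy (φ k)).le
  have hθ : t * ‖y (φ k) - x‖⁻¹ ∈ Icc (0 : ℝ) 1 :=
    ⟨by positivity, mul_inv_le_one_of_le₀ htk (hpos _).le⟩
  simpa only [Function.comp, d, smul_smul] using hconv.add_smul_sub_mem hx (hyC (φ k)) hθ

end ClosedConvex

section Orthogonal

variable {E : Type*} [NormedAddCommGroup E] [InnerProductSpace ℝ E]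

theorem setOf_forall_inner_sub_eq_zero (K : Submodule ℝ E) (x₀ : E) :
    {x | ∀ v ∈ (K : Set E), ⟪x - x₀, v⟫ = 0} = (AffineSubspace.mk' x₀ Kᗮ : Set E) := by
  ext x
  simp [AffineSubspace.mem_mk', Submodule.mem_orthogonal']

theorem isClosed_mk'_orthogonal (K : Submodule ℝ E) (x₀ : E) :
    IsClosed (AffineSubspace.mk' x₀ Kᗮ : Set E) := by
  rw [← AffineSubspace.isClosed_direction_iff, AffineSubspace.direction_mk']
  exact Submodule.isClosed_orthogonal K

theorem eq_setOf_inter_mk'_orthogonal_add {C : Set E} (K : Submodule ℝ E)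
    [K.HasOrthogonalProjection] (x₀ : E) (hC : ∀ x ∈ C, ∀ v ∈ K, x + v ∈ C) :
    C = {p | ∃ t ∈ C ∩ AffineSubspace.mk' x₀ Kᗮ, ∃ v ∈ K, p = t + v} := by
  ext x
  refine ⟨fun hx ↦ ?_, ?_⟩
  · obtain ⟨p, hp, q, hq, hpq⟩ := K.exists_add_mem_mem_orthogonal (x - x₀)
    refine ⟨x - p, ⟨by simpa [sub_eq_add_neg] using hC x hx (-p) (K.neg_mem hp), ?_⟩, p, hp,
      by abel⟩
    rw [SetLike.mem_coe, AffineSubspace.mem_mk', vsub_eq_sub]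
    convert hq using 1
    rw [sub_sub, add_comm, ← sub_sub, hpq, add_sub_cancel_left]
  · rintro ⟨t, ⟨ht, -⟩, v, hv, rfl⟩
    exact hC t ht v hv

theorem not_exists_line_subset_inter_mk'_orthogonal {C : Set E} (K : Submodule ℝ E) (x₀ : E)
    (hK : ∀ x u : E, (∀ s : ℝ, x + s • u ∈ C) → u ∈ K) :
    ¬ ∃ x u : E, u ≠ 0 ∧ ∀ s : ℝ, x + s • u ∈ C ∩ AffineSubspace.mk' x₀ Kᗮ := by
  rintro ⟨x, u, hu, hline⟩
  have huK : u ∈ K := hK x u fun s ↦ (hline s).1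
  have huKperp : u ∈ Kᗮ := by
    have h₁ : x + u - x₀ ∈ Kᗮ := by simpa using (hline 1).2
    have h₀ : x - x₀ ∈ Kᗮ := by simpa using (hline 0).2
    simpa using Kᗮ.sub_mem h₁ h₀
  exact hu ((Submodule.mem_bot ℝ).mp (K.inf_orthogonal_eq_bot ▸ ⟨huK, huKperp⟩))

end Orthogonal

theorem Convex.interior_nonempty_of_span_eq_top {E : Type*} [NormedAddCommGroup E]
    [NormedSpace ℝ E] [FiniteDimensional ℝ E] {s : Set E} (hs : Convex ℝ s) (h0 : (0 : E) ∈ s)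
    (hspan : Submodule.span ℝ s = ⊤) : (interior s).Nonempty := by
  refine hs.interior_nonempty_iff_affineSpan_eq_top.mpr ?_
  rw [AffineSubspace.affineSpan_eq_top_iff_vectorSpan_eq_top_of_nonempty ℝ E E ⟨0, h0⟩,
    vectorSpan_eq_span_vsub_set_right ℝ h0]
  simpa using hspan

namespace ProperCone

variable {E : Type*} [NormedAddCommGroup E] [InnerProductSpace ℝ E] [FiniteDimensional ℝ E]

theorem span_innerDual_eq_top (K : ProperCone ℝ E) (hK : ∀ v ∈ K, -v ∈ K → v = 0) :
    Submodule.span ℝ (innerDual (K : Set E) : Set E) = ⊤ := by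
  by_contra hne
  obtain ⟨v, hv, hv0⟩ :=
    Submodule.exists_mem_ne_zero_of_ne_bot (mt Submodule.orthogonal_eq_bot_iff.mp hne)
  have hperp : ∀ w ∈ innerDual (K : Set E), ⟪w, v⟫ = 0 := fun w hw ↦
    (Submodule.mem_orthogonal _ v).mp hv w (Submodule.subset_span hw)
  have hline : ∀ c : ℝ, c • v ∈ K := fun c ↦ by
    rw [← innerDual_innerDual K, mem_innerDual]
    intro w hw
    rw [real_inner_smul_right, hperp w hw, mul_zero]
  exact hv0 (hK v (by simpa using hline 1) (by simpa using hline (-1)))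

theorem exists_mul_norm_le_inner (K : ProperCone ℝ E) (hK : ∀ v ∈ K, -v ∈ K → v = 0) :
    ∃ w : E, ∃ δ > 0, ∀ u ∈ K, δ * ‖u‖ ≤ ⟪u, w⟫ := by
  obtain ⟨w, hw⟩ := (innerDual (K : Set E)).convex.interior_nonempty_of_span_eq_top
    (innerDual (K : Set E)).zero_mem (K.span_innerDual_eq_top hK)
  obtain ⟨δ, hδ, hball⟩ :=
    Metric.nhds_basis_closedBall.mem_iff.mp (mem_interior_iff_mem_nhds.mp hw)
  refine ⟨w, δ, hδ, fun u hu ↦ ?_⟩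
  rcases eq_or_ne u 0 with rfl | hu0
  · simp
  have hnorm : 0 < ‖u‖ := norm_pos_iff.mpr hu0
  -- the point of the ball around `w` furthest in the direction `-u`
  have hmem : w - (δ / ‖u‖) • u ∈ innerDual (K : Set E) := hball (by
    rw [Metric.mem_closedBall, dist_eq_norm, sub_sub_cancel_left, norm_neg, norm_smul,
      Real.norm_of_nonneg (by positivity), div_mul_cancel₀ δ hnorm.ne'])
  have h := mem_innerDual.mp hmem hu
  rw [inner_sub_right, real_inner_smul_right, real_inner_self_eq_norm_sq] at h
  have hscale : δ / ‖u‖ * ‖u‖ ^ 2 = δ * ‖u‖ := by field_simp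
  linarith

theorem exists_norm_eq_one_mul_norm_le_inner (K : ProperCone ℝ E) (hK : ∀ v ∈ K, -v ∈ K → v = 0)
    {u₀ : E} (hu₀K : u₀ ∈ K) (hu₀ : u₀ ≠ 0) :
    ∃ w : E, ‖w‖ = 1 ∧ ∃ ε > 0, ∀ u ∈ K, ε * ‖u‖ ≤ ⟪u, w⟫ := by
  obtain ⟨w, δ, hδ, hw⟩ := K.exists_mul_norm_le_inner hK
  have hw0 : w ≠ 0 := by
    rintro rfl
    have := hw u₀ hu₀K
    rw [inner_zero_right] at this
    exact (mul_pos hδ (norm_pos_iff.mpr hu₀)).not_ge this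
  refine ⟨‖w‖⁻¹ • w, by simp [norm_smul, hw0], ‖w‖⁻¹ * δ, by positivity, fun u hu ↦ ?_⟩
  rw [real_inner_smul_right, mul_assoc]
  exact mul_le_mul_of_nonneg_left (hw u hu) (by positivity)

end ProperCone

theorem stmt3 {n : ℕ} (f : EuclideanSpace ℝ (Fin n) → ℝ)
    (hf : ConvexOn ℝ Set.univ f)
    (x₀ : EuclideanSpace ℝ (Fin n)) (hx₀ : ∀ y, f x₀ ≤ f y)
    -- the set of minimizers `M = {x : f x = m}` where `m = f x₀` is the infimum
    (M : Set (EuclideanSpace ℝ (Fin n))) (hM : M = {x | f x = f x₀})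
    -- the lineality space of `M`
    (L : Set (EuclideanSpace ℝ (Fin n)))
    (hL : L = {v | ∀ x ∈ M, ∀ t : ℝ, x + t • v ∈ M})
    -- `T = M ∩ (x₀ + L^⊥)`
    (T : Set (EuclideanSpace ℝ (Fin n)))
    (hT : T = M ∩ {x | ∀ v ∈ L, ⟪x - x₀, v⟫ = 0}) :
    M = {p | ∃ t ∈ T, ∃ v ∈ L, p = t + v} ∧
    (¬ ∃ (x u : EuclideanSpace ℝ (Fin n)), u ≠ 0 ∧ ∀ s : ℝ, x + s • u ∈ T) ∧
    (¬ Bornology.IsBounded T →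
      (∃ u, IsRecessionDirection T u) ∧
      ∃ (w : EuclideanSpace ℝ (Fin n)) (ε : ℝ), ‖w‖ = 1 ∧ 0 < ε ∧
        ∀ u, IsRecessionDirection T u → ε ≤ ⟪u, w⟫) := by
  have hMconv : Convex ℝ M := by
    convert hf.convex_le (f x₀) using 1
    ext x
    simpa [hM] using ⟨le_of_eq, fun h ↦ le_antisymm h (hx₀ x)⟩
  have hMclosed : IsClosed M :=
    hM ▸ isClosed_eq (continuousOn_univ.mp (hf.continuousOn isOpen_univ)) continuous_const
  rw [← coe_lineal_recessionCone] at hL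
  rw [hL, setOf_forall_inner_sub_eq_zero] at hT
  subst hL hT
  set K := (recessionCone M).lineal
  have hnoline := not_exists_line_subset_inter_mk'_orthogonal K x₀ fun _ _ hline ↦
    hMclosed.mem_lineal_recessionCone_of_line hMconv hline
  refine ⟨eq_setOf_inter_mk'_orthogonal_add K x₀ fun x hx v hv ↦ by
    simpa using add_smul_mem_of_mem_lineal_recessionCone hv hx 1, hnoline, fun hunb ↦ ?_⟩
  have hTclosed := hMclosed.inter (isClosed_mk'_orthogonal K x₀)
  have hx₀T : x₀ ∈ M ∩ AffineSubspace.mk' x₀ Kᗮ :=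
    ⟨by simp [hM], AffineSubspace.self_mem_mk' x₀ Kᗮ⟩
  obtain ⟨u, hu, huT⟩ :=
    hTclosed.exists_norm_eq_one_mem_recessionCone (hMconv.inter (AffineSubspace.convex _)) hunb
  obtain ⟨w, hw, ε, hε, hwε⟩ := ProperCone.exists_norm_eq_one_mul_norm_le_inner
    ⟨recessionCone _, isClosed_recessionCone hTclosed⟩ (recessionCone_salient hx₀T hnoline)
    huT (norm_ne_zero_iff.mp (by simp [hu]))
  exact ⟨⟨u, hu, huT⟩, w, ε, hw, hε, fun u' hu' ↦ by simpa [hu'.1] using hwε u' hu'.2⟩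
end

section
/- Let C be a nonempty closed spherically convex subset of the unit sphere S of ℝⁿ. Then there exist linear subspaces V₁, V₂ of ℝⁿ with V₁ orthogonal to V₂ such that, writing S₁ = S ∩ V₁ and C₂ = C ∩ V₂: (a) S₁ ⊆ C and every subsphere of S contained in C is contained in S₁; (b) C = S₁ ∪ C₂ ∪ {cos(α)·s + sin(α)·c : s ∈ S₁, c ∈ C₂, α ∈ (0, π/2)}; (c) either C₂ = ∅ (and then C = S₁) or C₂ is a nonempty closed spherically convex set for which there exists c₀ ∈ C₂ with sup_{c∈C₂} d(c₀,c) < π/2. -/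
open scoped RealInnerProductSpace

/-- The unit sphere of `ℝⁿ`. -/
def unitSphere (n : ℕ) : Set (EuclideanSpace ℝ (Fin n)) := {x | ‖x‖ = 1}

/-- The angular metric on the unit sphere. -/
noncomputable def sdist {n : ℕ} (x y : EuclideanSpace ℝ (Fin n)) : ℝ :=
  Real.arccos ⟪x, y⟫

/-- A subset of the unit sphere is spherically convex if for all non-antipodal
distinct points `x, y` of it, the minimizing geodesic from `x` to `y` is
contained in it. -/
def SphConvex {n : ℕ} (C : Set (EuclideanSpace ℝ (Fin n))) : Prop :=
  ∀ x ∈ C, ∀ y ∈ C, x ≠ y → x ≠ -y → ∀ t ∈ Set.Icc (0 : ℝ) 1,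
    (Real.sin ((1 - t) * sdist x y) / Real.sin (sdist x y)) • x +
      (Real.sin (t * sdist x y) / Real.sin (sdist x y)) • y ∈ C

/-!
The nonnegative multiples of points of `C` form a convex cone `K`: a positive combination of two
non-antipodal points of `C` is a positive multiple of a point on the geodesic between them. Hence
`K` meets the unit sphere exactly in `C`, and the lineality space `V₁ = K ∩ -K` cuts out the
largest subsphere contained in `C`. Writing `c ∈ C` as `v + w` with `v ∈ V₁` and `w ∈ V₁ᗮ`, we get
`w = c - v ∈ K`, which gives the join decomposition. Finally `K ∩ V₁ᗮ` is salient, so the convex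
hull of `C₂ = C ∩ V₁ᗮ` avoids `0`; its point `b` nearest to the origin satisfies
`⟪b, c⟫ ≥ ‖b‖² > 0` on `C₂`, and `b / ‖b‖` is a center of `C₂` of radius `arccos ‖b‖ < π / 2`.
-/

open Real Set NormedSpace

section ConvexHull

variable {E : Type*} [NormedAddCommGroup E] [NormedSpace ℝ E] [FiniteDimensional ℝ E]

-- By Carathéodory, the convex hull is the union, over `k ≤ dim E + 1`, of the images of the
-- compact sets `stdSimplex ℝ (Fin k) × sᵏ` under `(w, z) ↦ ∑ i, w i • z i`.
theorem IsCompact.convexHull {s : Set E} (hs : IsCompact s) : IsCompact (convexHull ℝ s) := by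
  let combinations (k : ℕ) : Set E :=
    (fun p : (Fin k → ℝ) × (Fin k → E) ↦ ∑ i, p.1 i • p.2 i) ''
      (stdSimplex ℝ (Fin k) ×ˢ univ.pi fun _ ↦ s)
  have hunion : _root_.convexHull ℝ s =
      ⋃ k ∈ Finset.range (Module.finrank ℝ E + 2), combinations k := by
    ext x
    simp only [mem_iUnion, Finset.mem_range, exists_prop]
    constructor
    · intro hx
      obtain ⟨ι, _, z, w, hzs, hz, hw₀, hw₁, rfl⟩ := eq_pos_convex_span_of_mem_convexHull hx
      have hcard : Fintype.card ι < Module.finrank ℝ E + 2 := by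
        have := hz.card_le_finrank_succ
        have := Submodule.finrank_le (vectorSpan ℝ (range z))
        omega
      let e := (Fintype.equivFin ι).symm
      refine ⟨_, hcard, (w ∘ e, z ∘ e), ⟨⟨fun i ↦ (hw₀ _).le, (e.sum_comp w).trans hw₁⟩,
        fun i _ ↦ hzs ⟨_, rfl⟩⟩, e.sum_comp fun i ↦ w i • z i⟩
    · rintro ⟨k, -, ⟨w, z⟩, ⟨⟨hw₀, hw₁⟩, hz⟩, rfl⟩
      exact mem_convexHull_of_exists_fintype w z hw₀ hw₁ (fun i ↦ hz i (mem_univ i)) rfl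
  rw [hunion]
  exact (Finset.range _).isCompact_biUnion fun k _ ↦
    ((isCompact_stdSimplex ℝ (Fin k)).prod (isCompact_univ_pi fun _ ↦ hs)).image (by fun_prop)

end ConvexHull

section InnerProductSpace

variable {F : Type*} [NormedAddCommGroup F] [InnerProductSpace ℝ F]

-- `b` is the point of `B` nearest to the origin.
theorem exists_mem_forall_norm_sq_le_inner {B : Set F} (hne : B.Nonempty) (hB : IsComplete B)
    (hconv : Convex ℝ B) : ∃ b ∈ B, ∀ c ∈ B, ‖b‖ ^ 2 ≤ ⟪b, c⟫ := by
  obtain ⟨b, hb, hmin⟩ := exists_norm_eq_iInf_of_complete_convex hne hB hconv 0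
  refine ⟨b, hb, fun c hc ↦ ?_⟩
  have := (norm_eq_iInf_iff_real_inner_le_zero hconv hb).1 hmin c hc
  rw [zero_sub, inner_neg_left, inner_sub_right, real_inner_self_eq_norm_sq] at this
  linarith

theorem norm_cos_smul_add_sin_smul {x y : F} (hx : ‖x‖ = 1) (hy : ‖y‖ = 1) (hxy : ⟪x, y⟫ = 0)
    (α : ℝ) : ‖cos α • x + sin α • y‖ = 1 := by
  have hsq := norm_add_sq_eq_norm_sq_add_norm_sq_real
    (by rw [real_inner_smul_left, real_inner_smul_right, hxy, mul_zero, mul_zero] :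
      ⟪cos α • x, sin α • y⟫ = 0)
  rw [norm_smul, norm_smul, hx, hy, norm_eq_abs, norm_eq_abs] at hsq
  nlinarith [cos_sq_add_sin_sq α, sq_abs (cos α), sq_abs (sin α),
    norm_nonneg (cos α • x + sin α • y)]

theorem exists_add_eq_cos_smul_add_sin_smul {v w : F} (hv : v ≠ 0) (hw : w ≠ 0)
    (hvw : ⟪v, w⟫ = 0) (h : ‖v + w‖ = 1) :
    ∃ α ∈ Ioo 0 (π / 2), v + w = cos α • normalize v + sin α • normalize w := by
  have hpyth : ‖v‖ ^ 2 + ‖w‖ ^ 2 = 1 := by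
    have := norm_add_sq_eq_norm_sq_add_norm_sq_real hvw
    rw [h] at this
    nlinarith
  have hv₀ : 0 < ‖v‖ := norm_pos_iff.2 hv
  have hw₀ : 0 < ‖w‖ := norm_pos_iff.2 hw
  have hw₁ : ‖w‖ < 1 := by nlinarith
  refine ⟨arcsin ‖w‖, ⟨arcsin_pos.2 hw₀, arcsin_lt_pi_div_two.2 hw₁⟩, ?_⟩
  rw [sin_arcsin (by linarith) hw₁.le, cos_arcsin, ← hpyth, add_sub_cancel_right,
    sqrt_sq hv₀.le, norm_smul_normalize, norm_smul_normalize]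

end InnerProductSpace

theorem PointedCone.convex_inter_diff_zero {𝕜 M : Type*} [Field 𝕜] [LinearOrder 𝕜]
    [IsStrictOrderedRing 𝕜] [AddCommGroup M] [Module 𝕜 M] (K : PointedCone 𝕜 M)
    {W : Submodule 𝕜 M} (hW : Disjoint K.lineal W) : Convex 𝕜 ((K ∩ W : Set M) \ {0}) := by
  rintro x ⟨⟨hxK, hxW⟩, hx₀⟩ y ⟨⟨hyK, hyW⟩, hy₀⟩ a b ha hb hab
  refine ⟨⟨K.convex hxK hyK ha hb hab, W.add_mem (W.smul_mem a hxW) (W.smul_mem b hyW)⟩, ?_⟩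
  intro hsum
  rcases ha.eq_or_lt with rfl | ha
  · simp_all
  have hlineal : a • x ∈ K.lineal :=
    PointedCone.mem_lineal.2 ⟨K.smul_mem ha.le hxK,
      (neg_eq_of_add_eq_zero_right hsum) ▸ K.smul_mem hb hyK⟩
  have := Submodule.disjoint_def.1 hW _ hlineal (W.smul_mem a hxW)
  exact hx₀ ((smul_eq_zero.1 this).resolve_left ha.ne')

section Sphere

variable {n : ℕ} {C : Set (EuclideanSpace ℝ (Fin n))}

theorem ne_zero_of_mem_unitSphere {x : EuclideanSpace ℝ (Fin n)} (hx : x ∈ unitSphere n) :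
    x ≠ 0 :=
  norm_ne_zero_iff.1 (by rw [show ‖x‖ = 1 from hx]; exact one_ne_zero)

theorem sdist_mem_Ioo {x y : EuclideanSpace ℝ (Fin n)} (hx : ‖x‖ = 1) (hy : ‖y‖ = 1)
    (hxy : x ≠ y) (hxy' : x ≠ -y) : sdist x y ∈ Ioo 0 π := by
  have hlt : ⟪x, y⟫ < 1 := (inner_lt_one_iff_real_of_norm_eq_one hx hy).2 hxy
  have hgt : -1 < ⟪x, y⟫ := (neg_one_le_real_inner_of_norm_eq_one hx hy).lt_of_ne
    fun h ↦ hxy' ((inner_eq_neg_one_iff_of_norm_eq_one hx hy).1 h.symm)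
  exact ⟨arccos_pos.2 hlt, arccos_lt_pi.2 hgt⟩

noncomputable def sphGeodesic (x y : EuclideanSpace ℝ (Fin n)) (t : ℝ) :
    EuclideanSpace ℝ (Fin n) :=
  (sin ((1 - t) * sdist x y) / sin (sdist x y)) • x + (sin (t * sdist x y) / sin (sdist x y)) • y

theorem exists_sphGeodesic_eq_smul {x y : EuclideanSpace ℝ (Fin n)} (hx : ‖x‖ = 1)
    (hy : ‖y‖ = 1) (hxy : x ≠ y) (hxy' : x ≠ -y) {a b : ℝ} (ha : 0 < a) (hb : 0 < b) :
    ∃ t ∈ Icc (0 : ℝ) 1, ∃ k : ℝ, 0 < k ∧ sphGeodesic x y t = k • (a • x + b • y) := by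
  simp only [sphGeodesic]
  obtain ⟨hθ, hθπ⟩ := sdist_mem_Ioo hx hy hxy hxy'
  set θ := sdist x y
  have hsin : 0 < sin θ := sin_pos_of_pos_of_lt_pi hθ hθπ
  -- at such a `t` the two coefficients of the geodesic are proportional to `a` and `b`
  obtain ⟨t, ht, hbal⟩ : ∃ t ∈ Icc (0 : ℝ) 1, b * sin ((1 - t) * θ) - a * sin (t * θ) = 0 :=
    intermediate_value_Icc' zero_le_one (by fun_prop)
      ⟨by simpa using (mul_pos ha hsin).le, by simpa using (mul_pos hb hsin).le⟩
  have ht₀ : 0 < t := ht.1.lt_of_ne <| by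
    rintro rfl
    simp only [sub_zero, one_mul, zero_mul, sin_zero, mul_zero] at hbal
    exact (mul_pos hb hsin).ne' hbal
  have hsint : 0 < sin (t * θ) :=
    sin_pos_of_pos_of_lt_pi (mul_pos ht₀ hθ) (by nlinarith [ht.2])
  refine ⟨t, ht, sin (t * θ) / (b * sin θ), by positivity, ?_⟩
  rw [smul_add, smul_smul, smul_smul]
  congr 2
  · field_simp
    linarith
  · field_simp

theorem SphConvex.normalize_add_mem (hsub : C ⊆ unitSphere n) (hC : SphConvex C)
    {x y : EuclideanSpace ℝ (Fin n)} (hx : x ∈ C) (hy : y ∈ C) {a b : ℝ} (ha : 0 < a)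
    (hb : 0 < b) (hxy₀ : a • x + b • y ≠ 0) : normalize (a • x + b • y) ∈ C := by
  have hx₁ : ‖x‖ = 1 := hsub hx
  have hy₁ : ‖y‖ = 1 := hsub hy
  by_cases hxy : x = y
  · subst hxy
    rwa [← add_smul, normalize_smul_of_pos (by positivity), normalize_eq_self_of_norm_eq_one hx₁]
  by_cases hxy' : x = -y
  · subst hxy'
    rw [smul_neg, neg_add_eq_sub, ← sub_smul] at hxy₀ ⊢
    rcases lt_or_gt_of_ne (left_ne_zero_of_smul hxy₀) with hab | hab
    · rwa [normalize_smul_of_neg hab, ← normalize_neg, normalize_eq_self_of_norm_eq_one hx₁]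
    · rwa [normalize_smul_of_pos hab, normalize_eq_self_of_norm_eq_one hy₁]
  obtain ⟨t, ht, k, hk, hgeo⟩ := exists_sphGeodesic_eq_smul hx₁ hy₁ hxy hxy' ha hb
  have hmem : k • (a • x + b • y) ∈ C := hgeo ▸ hC x hx y hy hxy hxy' t ht
  rwa [← normalize_smul_of_pos hk, normalize_eq_self_of_norm_eq_one (hsub hmem)]

theorem SphConvex.normalize_mem_of_mem_hull (hsub : C ⊆ unitSphere n) (hC : SphConvex C)
    {x : EuclideanSpace ℝ (Fin n)} (hx : x ∈ PointedCone.hull ℝ C) (hx₀ : x ≠ 0) :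
    normalize x ∈ C := by
  induction hx using Submodule.span_induction with
  | mem x hx => rwa [normalize_eq_self_of_norm_eq_one (hsub hx)]
  | zero => exact absurd rfl hx₀
  | add x y _ _ ihx ihy =>
    rcases eq_or_ne x 0 with rfl | hx
    · simpa using ihy (by simpa using hx₀)
    rcases eq_or_ne y 0 with rfl | hy
    · simpa using ihx (by simpa using hx₀)
    rw [← norm_smul_normalize x, ← norm_smul_normalize y] at hx₀ ⊢
    exact hC.normalize_add_mem hsub (ihx hx) (ihy hy) (norm_pos_iff.2 hx) (norm_pos_iff.2 hy) hx₀
  | smul a x _ ih =>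
    rw [← Nonneg.coe_smul] at hx₀ ⊢
    rw [normalize_smul_of_pos (a.2.lt_of_ne' (left_ne_zero_of_smul hx₀))]
    exact ih (right_ne_zero_of_smul hx₀)

theorem SphConvex.mem_of_mem_hull (hsub : C ⊆ unitSphere n) (hC : SphConvex C)
    {x : EuclideanSpace ℝ (Fin n)} (hx : x ∈ PointedCone.hull ℝ C) (hx₁ : ‖x‖ = 1) : x ∈ C := by
  rw [← normalize_eq_self_of_norm_eq_one hx₁]
  exact hC.normalize_mem_of_mem_hull hsub hx (ne_zero_of_mem_unitSphere hx₁)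

def sphJoin (S T : Set (EuclideanSpace ℝ (Fin n))) : Set (EuclideanSpace ℝ (Fin n)) :=
  {p | ∃ s ∈ S, ∃ c ∈ T, ∃ α ∈ Ioo 0 (π / 2), p = cos α • s + sin α • c}

theorem SphConvex.inter_submodule (hC : SphConvex C)
    (V : Submodule ℝ (EuclideanSpace ℝ (Fin n))) : SphConvex (C ∩ V) :=
  fun x hx y hy hxy hxy' t ht ↦ ⟨hC x hx.1 y hy.1 hxy hxy' t ht,
    V.add_mem (V.smul_mem _ hx.2) (V.smul_mem _ hy.2)⟩

theorem unitSphere_inter_subset_lineal {V : Submodule ℝ (EuclideanSpace ℝ (Fin n))}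
    (hV : unitSphere n ∩ V ⊆ C) :
    unitSphere n ∩ V ⊆ unitSphere n ∩ (PointedCone.hull ℝ C).lineal := by
  rintro x ⟨hx₁, hxV⟩
  have hx₁' : -x ∈ unitSphere n := (norm_neg x).trans hx₁
  exact ⟨hx₁, PointedCone.subset_hull (hV ⟨hx₁, hxV⟩),
    PointedCone.subset_hull (hV ⟨hx₁', V.neg_mem hxV⟩)⟩

theorem SphConvex.unitSphere_inter_lineal_subset (hsub : C ⊆ unitSphere n) (hC : SphConvex C) :
    unitSphere n ∩ (PointedCone.hull ℝ C).lineal ⊆ C :=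
  fun _ hx ↦ hC.mem_of_mem_hull hsub (PointedCone.mem_lineal.1 hx.2).1 hx.1

theorem SphConvex.eq_union_sphJoin (hsub : C ⊆ unitSphere n) (hC : SphConvex C) :
    C = unitSphere n ∩ (PointedCone.hull ℝ C).lineal ∪ C ∩ ((PointedCone.hull ℝ C).lineal)ᗮ ∪
      sphJoin (unitSphere n ∩ (PointedCone.hull ℝ C).lineal)
        (C ∩ ((PointedCone.hull ℝ C).lineal)ᗮ) := by
  set K := PointedCone.hull ℝ C
  set V := K.lineal
  refine Subset.antisymm (fun c hc ↦ ?_) ?_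
  · obtain ⟨v, hv, w, hw, rfl⟩ := V.exists_add_mem_mem_orthogonal c
    have hwK : w ∈ K := by
      simpa using K.add_mem (PointedCone.subset_hull hc) (PointedCone.mem_lineal.1 hv).2
    rcases eq_or_ne w 0 with rfl | hw₀
    · exact .inl (.inl ⟨hsub hc, by simpa using hv⟩)
    rcases eq_or_ne v 0 with rfl | hv₀
    · exact .inl (.inr ⟨hc, by simpa using hw⟩)
    obtain ⟨α, hα, hvw⟩ := exists_add_eq_cos_smul_add_sin_smul hv₀ hw₀
      (V.inner_right_of_mem_orthogonal hv hw) (hsub hc)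
    exact .inr ⟨normalize v, ⟨norm_normalize hv₀, V.smul_mem _ hv⟩,
      normalize w, ⟨hC.normalize_mem_of_mem_hull hsub hwK hw₀, Vᗮ.smul_mem _ hw⟩, α, hα, hvw⟩
  · rintro p ((hp | hp) | ⟨s, hs, c, hc, α, hα, rfl⟩)
    · exact hC.unitSphere_inter_lineal_subset hsub hp
    · exact hp.1
    have hcos : 0 ≤ cos α := cos_nonneg_of_mem_Icc ⟨by linarith [hα.1, pi_pos], hα.2.le⟩
    have hsin : 0 ≤ sin α := sin_nonneg_of_nonneg_of_le_pi hα.1.le (by linarith [hα.2, pi_pos])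
    refine hC.mem_of_mem_hull hsub (K.add_mem (K.smul_mem hcos (PointedCone.mem_lineal.1 hs.2).1)
      (K.smul_mem hsin (PointedCone.subset_hull hc.1))) ?_
    exact norm_cos_smul_add_sin_smul hs.1 (hsub hc.1) (V.inner_right_of_mem_orthogonal hs.2 hc.2) α

theorem SphConvex.exists_sdist_le_lt_pi_div_two (hsub : C ⊆ unitSphere n) (hC : SphConvex C)
    (hcl : IsClosed C) (hne : (C ∩ ((PointedCone.hull ℝ C).lineal)ᗮ).Nonempty) :
    ∃ c₀ ∈ C ∩ ((PointedCone.hull ℝ C).lineal)ᗮ, ∃ r < π / 2,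
      ∀ c ∈ C ∩ ((PointedCone.hull ℝ C).lineal)ᗮ, sdist c₀ c ≤ r := by
  set K := PointedCone.hull ℝ C
  set D := C ∩ (K.lineal)ᗮ
  have hD : IsCompact D := (isCompact_sphere 0 1).of_isClosed_subset
    (hcl.inter (Submodule.closed_of_finiteDimensional _))
    fun x hx ↦ mem_sphere_zero_iff_norm.2 (hsub hx.1)
  -- `K ∩ K.linealᗮ` is salient
  have hhull : convexHull ℝ D ⊆ (K ∩ K.lineal ᗮ : Set _) \ {0} :=
    convexHull_min (fun x hx ↦ ⟨⟨PointedCone.subset_hull hx.1, hx.2⟩,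
      ne_zero_of_mem_unitSphere (hsub hx.1)⟩)
      (K.convex_inter_diff_zero K.lineal.orthogonal_disjoint)
  obtain ⟨b, hb, hbc⟩ := exists_mem_forall_norm_sq_le_inner (hne.mono (subset_convexHull ℝ D))
    hD.convexHull.isComplete (convex_convexHull ℝ D)
  obtain ⟨⟨hbK, hbV⟩, hb₀⟩ := hhull hb
  have hb₀' : 0 < ‖b‖ := norm_pos_iff.2 hb₀
  refine ⟨normalize b, ⟨hC.normalize_mem_of_mem_hull hsub hbK hb₀, Submodule.smul_mem _ _ hbV⟩,
    arccos ‖b‖, arccos_lt_pi_div_two.2 hb₀', fun c hc ↦ arccos_le_arccos ?_⟩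
  rw [NormedSpace.normalize, real_inner_smul_left, le_inv_mul_iff₀ hb₀', ← sq]
  exact hbc c (subset_convexHull ℝ D hc)

end Sphere

theorem stmt4_general {n : ℕ} (C : Set (EuclideanSpace ℝ (Fin n)))
    (hcl : IsClosed C) (hsub : C ⊆ unitSphere n)
    (hconv : SphConvex C) :
    ∃ V₁ V₂ : Submodule ℝ (EuclideanSpace ℝ (Fin n)),
      (∀ v ∈ V₁, ∀ w ∈ V₂, ⟪v, w⟫ = 0) ∧
      -- (a) `S₁ = S ∩ V₁` is contained in `C` and contains every subsphere of `S`
      -- contained in `C`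
      (unitSphere n ∩ V₁ ⊆ C) ∧
      (∀ V : Submodule ℝ (EuclideanSpace ℝ (Fin n)), V ≠ ⊥ →
        unitSphere n ∩ V ⊆ C → unitSphere n ∩ V ⊆ unitSphere n ∩ V₁) ∧
      -- (b) `C` is the spherical join of `S₁` and `C₂ = C ∩ V₂`
      C = (unitSphere n ∩ V₁) ∪ (C ∩ V₂) ∪
        {p | ∃ s ∈ unitSphere n ∩ (V₁ : Set (EuclideanSpace ℝ (Fin n))),
          ∃ c ∈ C ∩ (V₂ : Set (EuclideanSpace ℝ (Fin n))),
          ∃ α ∈ Set.Ioo (0 : ℝ) (Real.pi / 2),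
            p = Real.cos α • s + Real.sin α • c} ∧
      -- (c) either `C₂` is empty and `C = S₁`, or `C₂` is a nonempty closed
      -- spherically convex set of intrinsic radius `< π/2`
      ((C ∩ (V₂ : Set (EuclideanSpace ℝ (Fin n))) = ∅ ∧
          C = unitSphere n ∩ V₁) ∨
        ((C ∩ (V₂ : Set (EuclideanSpace ℝ (Fin n)))).Nonempty ∧
          IsClosed (C ∩ (V₂ : Set (EuclideanSpace ℝ (Fin n)))) ∧
          SphConvex (C ∩ (V₂ : Set (EuclideanSpace ℝ (Fin n)))) ∧
          ∃ c₀ ∈ C ∩ (V₂ : Set (EuclideanSpace ℝ (Fin n))), ∃ r : ℝ,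
            r < Real.pi / 2 ∧
            ∀ c ∈ C ∩ (V₂ : Set (EuclideanSpace ℝ (Fin n))), sdist c₀ c ≤ r)) := by
  have hjoin := hconv.eq_union_sphJoin hsub
  set V₁ := (PointedCone.hull ℝ C).lineal
  refine ⟨V₁, V₁ᗮ, fun v hv w hw ↦ V₁.inner_right_of_mem_orthogonal hv hw,
    hconv.unitSphere_inter_lineal_subset hsub, fun V _ hV ↦ unitSphere_inter_subset_lineal hV,
    hjoin, ?_⟩
  rcases (C ∩ (V₁ᗮ : Set _)).eq_empty_or_nonempty with hC₂ | hC₂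
  · refine .inl ⟨hC₂, hjoin.trans ?_⟩
    rw [hC₂]
    simp [sphJoin]
  · exact .inr ⟨hC₂, hcl.inter (Submodule.closed_of_finiteDimensional _),
      hconv.inter_submodule _, hconv.exists_sdist_le_lt_pi_div_two hsub hcl hC₂⟩

theorem stmt4 {n : ℕ} (C : Set (EuclideanSpace ℝ (Fin n)))
    (hne : C.Nonempty) (hcl : IsClosed C) (hsub : C ⊆ unitSphere n)
    (hconv : SphConvex C) :
    ∃ V₁ V₂ : Submodule ℝ (EuclideanSpace ℝ (Fin n)),
      (∀ v ∈ V₁, ∀ w ∈ V₂, ⟪v, w⟫ = 0) ∧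
      -- (a) `S₁ = S ∩ V₁` is contained in `C` and contains every subsphere of `S`
      -- contained in `C`
      (unitSphere n ∩ V₁ ⊆ C) ∧
      (∀ V : Submodule ℝ (EuclideanSpace ℝ (Fin n)), V ≠ ⊥ →
        unitSphere n ∩ V ⊆ C → unitSphere n ∩ V ⊆ unitSphere n ∩ V₁) ∧
      -- (b) `C` is the spherical join of `S₁` and `C₂ = C ∩ V₂`
      C = (unitSphere n ∩ V₁) ∪ (C ∩ V₂) ∪
        {p | ∃ s ∈ unitSphere n ∩ (V₁ : Set (EuclideanSpace ℝ (Fin n))),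
          ∃ c ∈ C ∩ (V₂ : Set (EuclideanSpace ℝ (Fin n))),
          ∃ α ∈ Set.Ioo (0 : ℝ) (Real.pi / 2),
            p = Real.cos α • s + Real.sin α • c} ∧
      -- (c) either `C₂` is empty and `C = S₁`, or `C₂` is a nonempty closed
      -- spherically convex set of intrinsic radius `< π/2`
      ((C ∩ (V₂ : Set (EuclideanSpace ℝ (Fin n))) = ∅ ∧
          C = unitSphere n ∩ V₁) ∨
        ((C ∩ (V₂ : Set (EuclideanSpace ℝ (Fin n)))).Nonempty ∧
          IsClosed (C ∩ (V₂ : Set (EuclideanSpace ℝ (Fin n)))) ∧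
          SphConvex (C ∩ (V₂ : Set (EuclideanSpace ℝ (Fin n)))) ∧
          ∃ c₀ ∈ C ∩ (V₂ : Set (EuclideanSpace ℝ (Fin n))), ∃ r : ℝ,
            r < Real.pi / 2 ∧
            ∀ c ∈ C ∩ (V₂ : Set (EuclideanSpace ℝ (Fin n))), sdist c₀ c ≤ r)) :=
  stmt4_general C hcl hsub hconv
end

section
/- Let V and W be nonzero linear subspaces of ℝⁿ and let S be the unit sphere of ℝⁿ with the angular metric. The smallest closed spherically convex subset of S containing (S ∩ V) ∪ (S ∩ W) is the subsphere S ∩ (V + W). In particular, the closed convex hull in S of a union of two subspheres is again a subsphere. -/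
/-!
Every point of `S ∩ (V + W)` is either a unit vector of `V` or `W`, or a positive combination
`α v + β w` of unit vectors `v ∈ V`, `w ∈ W`. A unit vector `α v + β w` with `α, β > 0` lies on
the minimizing geodesic from `v` to `w`: if `θ` is the angle between `v` and `w` and `φ` the angle
between `v` and `α v + β w`, then `sin (θ - φ) = α sin θ > 0`, so `0 ≤ φ < θ`. Hence every
spherically convex set containing `S ∩ V` and `S ∩ W` contains `S ∩ (V + W)`, which is itself
closed and spherically convex.
-/

open scoped RealInnerProductSpace

open Real Set

lemma sin_sq_add_sin_sq_add_mul_cos_add (A B : ℝ) :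
    sin A ^ 2 + sin B ^ 2 + 2 * sin A * sin B * cos (A + B) = sin (A + B) ^ 2 := by
  rw [sin_add, cos_add]
  linear_combination (-sin A ^ 2) * sin_sq_add_cos_sq B + (-sin B ^ 2) * sin_sq_add_cos_sq A

lemma sin_div_sin_sq_add_sin_div_sin_sq {θ : ℝ} (hθ : sin θ ≠ 0) (t : ℝ) :
    (sin ((1 - t) * θ) / sin θ) ^ 2 + (sin (t * θ) / sin θ) ^ 2 +
      2 * (sin ((1 - t) * θ) / sin θ) * (sin (t * θ) / sin θ) * cos θ = 1 := by
  have h := sin_sq_add_sin_sq_add_mul_cos_add ((1 - t) * θ) (t * θ)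
  rw [show (1 - t) * θ + t * θ = θ by ring] at h
  field_simp
  linear_combination h

lemma exists_mem_Icc_sin_div_sin_eq {θ α β : ℝ} (hθ₀ : 0 < θ) (hθπ : θ < π) (hα : 0 < α)
    (hβ : 0 < β) (h : α ^ 2 + β ^ 2 + 2 * α * β * cos θ = 1) :
    ∃ t ∈ Icc (0 : ℝ) 1, sin ((1 - t) * θ) / sin θ = α ∧ sin (t * θ) / sin θ = β := by
  have hs : 0 < sin θ := sin_pos_of_pos_of_lt_pi hθ₀ hθπ
  -- `(u, β sin θ)` are the coordinates of `α x + β y` in an orthonormal frame of the plane of the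
  -- unit vectors `x, y` at angle `θ`, starting at `x`
  set u := α + β * cos θ
  have hu : u ^ 2 + (β * sin θ) ^ 2 = 1 := by
    linear_combination h + β ^ 2 * sin_sq_add_cos_sq θ
  set φ := arccos u
  have hcosφ : cos φ = u := cos_arccos (by nlinarith) (by nlinarith)
  have hsinφ : sin φ = β * sin θ := by
    rw [sin_arccos, show 1 - u ^ 2 = (β * sin θ) ^ 2 by linarith, sqrt_sq (by positivity)]
  have hsinθφ : sin (θ - φ) = α * sin θ := by
    rw [sin_sub, hcosφ, hsinφ]
    ring
  have hφθ : φ < θ := by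
    by_contra! hle
    have := sin_nonpos_of_nonpos_of_neg_pi_le (sub_nonpos.2 hle) (by linarith [arccos_le_pi u])
    nlinarith
  refine ⟨φ / θ, ⟨div_nonneg (arccos_nonneg u) hθ₀.le, (div_le_one hθ₀).2 hφθ.le⟩, ?_, ?_⟩
  · rw [sub_mul, one_mul, div_mul_cancel₀ _ hθ₀.ne', hsinθφ, mul_div_cancel_right₀ _ hs.ne']
  · rw [div_mul_cancel₀ _ hθ₀.ne', hsinφ, mul_div_cancel_right₀ _ hs.ne']

lemma norm_smul_add_smul_sq_of_norm_eq_one {E : Type*} [NormedAddCommGroup E]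
    [InnerProductSpace ℝ E] {x y : E} (hx : ‖x‖ = 1) (hy : ‖y‖ = 1) (a b : ℝ) :
    ‖a • x + b • y‖ ^ 2 = a ^ 2 + b ^ 2 + 2 * a * b * ⟪x, y⟫ := by
  rw [norm_add_sq_real, norm_smul, norm_smul, real_inner_smul_left, real_inner_smul_right, hx, hy,
    Real.norm_eq_abs, Real.norm_eq_abs, mul_one, mul_one, sq_abs, sq_abs]
  ring

section Sphere

variable {n : ℕ} {x y : EuclideanSpace ℝ (Fin n)}

lemma cos_sdist (hx : ‖x‖ = 1) (hy : ‖y‖ = 1) : cos (sdist x y) = ⟪x, y⟫ :=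
  cos_arccos (neg_one_le_real_inner_of_norm_eq_one hx hy) (real_inner_le_one_of_norm_eq_one hx hy)

lemma sdist_pos (hx : ‖x‖ = 1) (hy : ‖y‖ = 1) (hxy : x ≠ y) : 0 < sdist x y :=
  arccos_pos.2 ((inner_lt_one_iff_real_of_norm_eq_one hx hy).2 hxy)

lemma sdist_lt_pi (hx : ‖x‖ = 1) (hy : ‖y‖ = 1) (hxy : x ≠ -y) : sdist x y < π :=
  arccos_lt_pi.2 <| (neg_one_le_real_inner_of_norm_eq_one hx hy).lt_of_ne
    fun h ↦ hxy ((inner_eq_neg_one_iff_of_norm_eq_one hx hy).1 h.symm)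

lemma sphConvex_unitSphere_inter (U : Submodule ℝ (EuclideanSpace ℝ (Fin n))) :
    SphConvex (unitSphere n ∩ U) := by
  rintro x ⟨hx, hxU⟩ y ⟨hy, hyU⟩ hxy hxy' t -
  refine ⟨?_, U.add_mem (U.smul_mem _ hxU) (U.smul_mem _ hyU)⟩
  have hs := sin_pos_of_pos_of_lt_pi (sdist_pos hx hy hxy) (sdist_lt_pi hx hy hxy')
  refine (pow_eq_one_iff_of_nonneg (norm_nonneg _) two_ne_zero).1 ?_
  rw [norm_smul_add_smul_sq_of_norm_eq_one hx hy, ← cos_sdist hx hy]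
  exact sin_div_sin_sq_add_sin_div_sin_sq hs.ne' t

lemma SphConvex.smul_add_smul_mem {D : Set (EuclideanSpace ℝ (Fin n))} (hD : SphConvex D)
    (hxD : x ∈ D) (hyD : y ∈ D) (hx : ‖x‖ = 1) (hy : ‖y‖ = 1) {α β : ℝ} (hα : 0 < α)
    (hβ : 0 < β) (h : ‖α • x + β • y‖ = 1) : α • x + β • y ∈ D := by
  rcases eq_or_ne x y with rfl | hxy
  · rw [← add_smul, norm_smul, hx, mul_one, Real.norm_eq_abs, abs_of_pos (by positivity)] at h
    rwa [← add_smul, h, one_smul]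
  rcases eq_or_ne x (-y) with rfl | hxy'
  · rw [smul_neg, neg_add_eq_sub, ← sub_smul] at h ⊢
    rw [norm_smul, hy, mul_one, Real.norm_eq_abs] at h
    rcases (abs_eq zero_le_one).1 h with h | h <;> rw [h]
    · rwa [one_smul]
    · rwa [neg_one_smul]
  obtain ⟨t, ht, rfl, rfl⟩ := exists_mem_Icc_sin_div_sin_eq (sdist_pos hx hy hxy)
    (sdist_lt_pi hx hy hxy') hα hβ
    (by rw [cos_sdist hx hy, ← norm_smul_add_smul_sq_of_norm_eq_one hx hy, h, one_pow])
  exact hD x hxD y hyD hxy hxy' t ht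

lemma unitSphere_inter_sup_subset {V W : Submodule ℝ (EuclideanSpace ℝ (Fin n))}
    {D : Set (EuclideanSpace ℝ (Fin n))} (hD : SphConvex D)
    (hVW : unitSphere n ∩ V ∪ unitSphere n ∩ W ⊆ D) :
    unitSphere n ∩ (V ⊔ W : Submodule ℝ (EuclideanSpace ℝ (Fin n))) ⊆ D := by
  rintro _ ⟨hz, hzVW⟩
  obtain ⟨v, hv, w, hw, rfl⟩ := Submodule.mem_sup.1 hzVW
  rcases eq_or_ne v 0 with rfl | hv0
  · rw [zero_add] at hz ⊢
    exact hVW (Or.inr ⟨hz, hw⟩)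
  rcases eq_or_ne w 0 with rfl | hw0
  · rw [add_zero] at hz ⊢
    exact hVW (Or.inl ⟨hz, hv⟩)
  have hv' : ‖v‖ • (‖v‖⁻¹ • v) = v := smul_inv_smul₀ (norm_ne_zero_iff.2 hv0) v
  have hw' : ‖w‖ • (‖w‖⁻¹ • w) = w := smul_inv_smul₀ (norm_ne_zero_iff.2 hw0) w
  have hv₁ : ‖‖v‖⁻¹ • v‖ = 1 := norm_smul_inv_norm (𝕜 := ℝ) hv0
  have hw₁ : ‖‖w‖⁻¹ • w‖ = 1 := norm_smul_inv_norm (𝕜 := ℝ) hw0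
  have key := hD.smul_add_smul_mem (hVW (Or.inl ⟨hv₁, V.smul_mem _ hv⟩))
    (hVW (Or.inr ⟨hw₁, W.smul_mem _ hw⟩)) hv₁ hw₁ (norm_pos_iff.2 hv0) (norm_pos_iff.2 hw0)
    (by rwa [hv', hw'])
  rwa [hv', hw'] at key

end Sphere

theorem stmt7_general {n : ℕ} (V W : Submodule ℝ (EuclideanSpace ℝ (Fin n))) :
    -- `S ∩ (V + W)` is a closed spherically convex subset of `S`
    IsClosed (unitSphere n ∩ (V ⊔ W : Submodule ℝ (EuclideanSpace ℝ (Fin n))) :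
      Set (EuclideanSpace ℝ (Fin n))) ∧
    SphConvex (unitSphere n ∩ (V ⊔ W : Submodule ℝ (EuclideanSpace ℝ (Fin n)))) ∧
    -- it contains `(S ∩ V) ∪ (S ∩ W)`
    (unitSphere n ∩ V) ∪ (unitSphere n ∩ W) ⊆
      unitSphere n ∩ (V ⊔ W : Submodule ℝ (EuclideanSpace ℝ (Fin n))) ∧
    -- and it is the smallest such: any closed spherically convex subset of `S`
    -- containing `(S ∩ V) ∪ (S ∩ W)` contains it
    ∀ D : Set (EuclideanSpace ℝ (Fin n)), IsClosed D → SphConvex D →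
      D ⊆ unitSphere n → (unitSphere n ∩ V) ∪ (unitSphere n ∩ W) ⊆ D →
      unitSphere n ∩ (V ⊔ W : Submodule ℝ (EuclideanSpace ℝ (Fin n))) ⊆ D :=
  ⟨(isClosed_eq continuous_norm continuous_const).inter (Submodule.closed_of_finiteDimensional _),
    sphConvex_unitSphere_inter _,
    union_subset (inter_subset_inter_right _ (SetLike.coe_subset_coe.2 le_sup_left))
      (inter_subset_inter_right _ (SetLike.coe_subset_coe.2 le_sup_right)),
    fun _ _ hD _ hVW ↦ unitSphere_inter_sup_subset hD hVW⟩

theorem stmt7 {n : ℕ} (V W : Submodule ℝ (EuclideanSpace ℝ (Fin n)))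
    (hV : V ≠ ⊥) (hW : W ≠ ⊥) :
    -- `S ∩ (V + W)` is a closed spherically convex subset of `S`
    IsClosed (unitSphere n ∩ (V ⊔ W : Submodule ℝ (EuclideanSpace ℝ (Fin n))) :
      Set (EuclideanSpace ℝ (Fin n))) ∧
    SphConvex (unitSphere n ∩ (V ⊔ W : Submodule ℝ (EuclideanSpace ℝ (Fin n)))) ∧
    -- it contains `(S ∩ V) ∪ (S ∩ W)`
    (unitSphere n ∩ V) ∪ (unitSphere n ∩ W) ⊆
      unitSphere n ∩ (V ⊔ W : Submodule ℝ (EuclideanSpace ℝ (Fin n))) ∧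
    -- and it is the smallest such: any closed spherically convex subset of `S`
    -- containing `(S ∩ V) ∪ (S ∩ W)` contains it
    ∀ D : Set (EuclideanSpace ℝ (Fin n)), IsClosed D → SphConvex D →
      D ⊆ unitSphere n → (unitSphere n ∩ V) ∪ (unitSphere n ∩ W) ⊆ D →
      unitSphere n ∩ (V ⊔ W : Submodule ℝ (EuclideanSpace ℝ (Fin n))) ⊆ D :=
  stmt7_general V W
end
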